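/- Let (X,d) be a compact metric space, f_0,...,f_{m-1} continuous self-maps, φ continuous on X, M = max_{x∈X}|φ(x)|, and 0<r<1/2. Then P^s_{2r}(f_0,...,f_{m-1},φ) − 2Mr ≤ P_r(f_0,...,f_{m-1},φ) ≤ P^s_r(f_0,...,f_{m-1},φ). -/

import Mathlib

open Filter Topology

section FSG

variable {X : Type*}

/-- Apply the maps of the free semigroup action along a word; the first letter of the
list is applied first. -/
def fw {ι : Type*} (f : ι → X → X) (w : List ι) (x : X) : X :=
  w.foldl (fun y a => f a y) x

/-- The Birkhoff-type sum `(S_w φ)(x) = ∑_{w' ≤ w} φ(f_{w'} x)`. -/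
noncomputable def Sw {ι : Type*} (f : ι → X → X) (φ : X → ℝ) (w : List ι) (x : X) : ℝ :=
  ∑ i ∈ Finset.range w.length, φ (fw f (w.take i) x)

variable [MetricSpace X]

/-- `F` is a `(w, ε, r)`-spanning set for the free semigroup action. -/
def rSpan {ι : Type*} (f : ι → X → X) (w : List ι) (ε r : ℝ) (F : Finset X) : Prop :=
  ∀ x : X, ∃ y ∈ F, (1 - r) * w.length <
    (((Finset.range w.length).filter
      (fun i => dist (fw f (w.take i) x) (fw f (w.take i) y) < ε)).card : ℝ)

/-- `E` is a `(w, ε, r)`-separated set for the free semigroup action. -/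
def rSep {ι : Type*} (f : ι → X → X) (w : List ι) (ε r : ℝ) (E : Finset X) : Prop :=
  ∀ x ∈ E, ∀ y ∈ E, x ≠ y → r * w.length <
    (((Finset.range w.length).filter
      (fun i => ε ≤ dist (fw f (w.take i) x) (fw f (w.take i) y))).card : ℝ)

/-- `Q_w(f_0,…,f_{m-1},φ,ε,r)` (spanning-set version). -/
noncomputable def Qw {ι : Type*} (f : ι → X → X) (φ : X → ℝ) (w : List ι) (ε r : ℝ) : ℝ :=
  sInf {s : ℝ | ∃ F : Finset X, rSpan f w ε r F ∧ s = ∑ x ∈ F, Real.exp (Sw f φ w x)}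

/-- `Q_w^s(f_0,…,f_{m-1},φ,ε,r)` (separated-set version). -/
noncomputable def Qws {ι : Type*} (f : ι → X → X) (φ : X → ℝ) (w : List ι) (ε r : ℝ) : ℝ :=
  sSup {s : ℝ | ∃ E : Finset X, rSep f w ε r E ∧ s = ∑ x ∈ E, Real.exp (Sw f φ w x)}

/-- `Q_n(f_0,…,f_{m-1},φ,ε,r) = (1/m^n) ∑_{|w|=n} Q_w`. -/
noncomputable def Qn {ι : Type*} [Fintype ι] (f : ι → X → X) (φ : X → ℝ)
    (n : ℕ) (ε r : ℝ) : ℝ :=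
  (1 / (Fintype.card ι : ℝ) ^ n) * ∑ σ : Fin n → ι, Qw f φ (List.ofFn σ) ε r

/-- `Q_n^s(f_0,…,f_{m-1},φ,ε,r) = (1/m^n) ∑_{|w|=n} Q_w^s`. -/
noncomputable def Qns {ι : Type*} [Fintype ι] (f : ι → X → X) (φ : X → ℝ)
    (n : ℕ) (ε r : ℝ) : ℝ :=
  (1 / (Fintype.card ι : ℝ) ^ n) * ∑ σ : Fin n → ι, Qws f φ (List.ofFn σ) ε r

/-- The topological `r`-pressure of the free semigroup action (spanning sets);
the limit as `ε → 0` is realised as a supremum over `ε > 0`, the quantity being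
monotone in `ε`. -/
noncomputable def Pr {ι : Type*} [Fintype ι] (f : ι → X → X) (φ : X → ℝ) (r : ℝ) : EReal :=
  ⨆ ε ∈ Set.Ioi (0 : ℝ), atTop.limsup fun n : ℕ =>
    (((n : ℝ)⁻¹ * Real.log (Qn f φ n ε r) : ℝ) : EReal)

/-- `P^s_r(f_0,…,f_{m-1},φ,ε)`, the fixed-`ε` separated-set `r`-pressure. -/
noncomputable def Pse {ι : Type*} [Fintype ι] (f : ι → X → X) (φ : X → ℝ) (ε r : ℝ) : EReal :=
  atTop.limsup fun n : ℕ => (((n : ℝ)⁻¹ * Real.log (Qns f φ n ε r) : ℝ) : EReal)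

/-- The topological `r`-pressure of the free semigroup action (separated sets). -/
noncomputable def Ps {ι : Type*} [Fintype ι] (f : ι → X → X) (φ : X → ℝ) (r : ℝ) : EReal :=
  ⨆ ε ∈ Set.Ioi (0 : ℝ), Pse f φ ε r

/-- Liminf variant of the separated-set topological `r`-pressure. -/
noncomputable def PsInf {ι : Type*} [Fintype ι] (f : ι → X → X) (φ : X → ℝ) (r : ℝ) : EReal :=
  ⨆ ε ∈ Set.Ioi (0 : ℝ), atTop.liminf fun n : ℕ =>
    (((n : ℝ)⁻¹ * Real.log (Qns f φ n ε r) : ℝ) : EReal)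

/-- `F` is a `(w, ε)`-spanning set for the Bowen metric `d_w` of the free semigroup action. -/
def span0 {ι : Type*} (f : ι → X → X) (w : List ι) (ε : ℝ) (F : Finset X) : Prop :=
  ∀ x : X, ∃ y ∈ F, ∀ i < w.length,
    dist (fw f (w.take i) x) (fw f (w.take i) y) ≤ ε

/-- `E` is a `(w, ε)`-separated set for the Bowen metric `d_w`. -/
def sep0 {ι : Type*} (f : ι → X → X) (w : List ι) (ε : ℝ) (E : Finset X) : Prop :=
  ∀ x ∈ E, ∀ y ∈ E, x ≠ y → ∃ i < w.length,
    ε < dist (fw f (w.take i) x) (fw f (w.take i) y)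

noncomputable def Qw0 {ι : Type*} (f : ι → X → X) (φ : X → ℝ) (w : List ι) (ε : ℝ) : ℝ :=
  sInf {s : ℝ | ∃ F : Finset X, span0 f w ε F ∧ s = ∑ x ∈ F, Real.exp (Sw f φ w x)}

noncomputable def Qws0 {ι : Type*} (f : ι → X → X) (φ : X → ℝ) (w : List ι) (ε : ℝ) : ℝ :=
  sSup {s : ℝ | ∃ E : Finset X, sep0 f w ε E ∧ s = ∑ x ∈ E, Real.exp (Sw f φ w x)}

noncomputable def Qn0 {ι : Type*} [Fintype ι] (f : ι → X → X) (φ : X → ℝ) (n : ℕ) (ε : ℝ) : ℝ :=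
  (1 / (Fintype.card ι : ℝ) ^ n) * ∑ σ : Fin n → ι, Qw0 f φ (List.ofFn σ) ε

noncomputable def Qns0 {ι : Type*} [Fintype ι] (f : ι → X → X) (φ : X → ℝ) (n : ℕ) (ε : ℝ) : ℝ :=
  (1 / (Fintype.card ι : ℝ) ^ n) * ∑ σ : Fin n → ι, Qws0 f φ (List.ofFn σ) ε

/-- The topological pressure of the free semigroup action. -/
noncomputable def P0 {ι : Type*} [Fintype ι] (f : ι → X → X) (φ : X → ℝ) : EReal :=
  ⨆ ε ∈ Set.Ioi (0 : ℝ), atTop.limsup fun n : ℕ =>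
    (((n : ℝ)⁻¹ * Real.log (Qn0 f φ n ε) : ℝ) : EReal)

/-- `r_w(ε,r)`: the smallest cardinality of a `(w,ε,r)`-spanning set. -/
noncomputable def rSpanCard {ι : Type*} (f : ι → X → X) (w : List ι) (ε r : ℝ) : ℕ :=
  sInf {k : ℕ | ∃ F : Finset X, rSpan f w ε r F ∧ F.card = k}

/-- The topological `r`-entropy of the free semigroup action. -/
noncomputable def hrEnt {ι : Type*} [Fintype ι] (f : ι → X → X) (r : ℝ) : EReal :=
  ⨆ ε ∈ Set.Ioi (0 : ℝ), atTop.limsup fun n : ℕ =>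
    (((n : ℝ)⁻¹ * Real.log ((1 / (Fintype.card ι : ℝ) ^ n) *
      ∑ σ : Fin n → ι, (rSpanCard f (List.ofFn σ) ε r : ℝ)) : ℝ) : EReal)

end FSG

/-!
`Pr ≤ Ps`: a maximal set whose points pairwise have at least `r|w|` far times (times at which
their orbits along `w` are at least `ε` apart) is `(w, ε, r)`-spanning, but, the bound being
attained, it need not be `(w, ε, r)`-separated. Choose `ε' ≤ ε / 2` so that every `f a` maps
`ε'`-close points to `ε`-close points. A point `y` of the set that fails to be
`(w, ε', r)`-separated from `x` is far from `x` at exactly the first `r|w|` times, so these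
`y` together with `x` are `ε`-separated already at time `0`; there are fewer than `P` of them,
`P` bounding the size of `ε`-separated subsets of `X`. Greedy colouring then splits the set into
`P` sets that are `(w, ε', r)`-separated, whence `Q_w(ε, r) ≤ P Q^s_w(ε', r)`, and the factor `P`
does not change the exponential growth rate.

`Ps(2r) - 2Mr ≤ Pr`: send each point of a `(w, ε, 2r)`-separated set to a point of a
`(w, ε/2, r)`-spanning set that is `ε/2`-close to it at more than `(1 - r)|w|` times. This map is
injective, since two points with the same image have fewer than `2r|w|` far times. Along an orbit
and its image the Birkhoff sums differ by at most the oscillation `κ` of `φ` at scale `ε/2` at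
the close times and by at most `2M` at the fewer than `r|w|` far times, so
`Q^s_w(ε, 2r) ≤ exp(|w|(κ + 2Mr)) Q_w(ε/2, r)`, and `κ → 0` with `ε`.
-/

open Finset

section FiniteFamily

variable {X V : Type*} [MetricSpace X] [CompactSpace X] [Finite V] {g : V → X → X}

theorem exists_pos_forall_dist_lt (hg : ∀ v, Continuous (g v)) {η : ℝ} (hη : 0 < η) :
    ∃ δ > 0, ∀ x y, dist x y < δ → ∀ v, dist (g v x) (g v y) < η :=
  Metric.uniformEquicontinuous_iff.1
    (CompactSpace.uniformEquicontinuous_of_equicontinuous (equicontinuous_finite.2 hg)) η hη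

theorem exists_finset_forall_dist_lt (hg : ∀ v, Continuous (g v)) {η : ℝ} (hη : 0 < η) :
    ∃ F : Finset X, ∀ x, ∃ y ∈ F, ∀ v, dist (g v x) (g v y) < η := by
  obtain ⟨δ, hδ, hg⟩ := exists_pos_forall_dist_lt hg hη
  obtain ⟨t, -, ht, hcover⟩ := finite_cover_balls_of_compact (isCompact_univ (X := X)) hδ
  refine ⟨ht.toFinset, fun x => ?_⟩
  obtain ⟨y, hy, hxy⟩ := Set.mem_iUnion₂.1 (hcover (Set.mem_univ x))
  exact ⟨y, ht.mem_toFinset.2 hy, hg x y hxy⟩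

theorem exists_card_le_of_forall_exists_le_dist (hg : ∀ v, Continuous (g v)) {ε : ℝ}
    (hε : 0 < ε) :
    ∃ K : ℕ, ∀ E : Finset X, (∀ x ∈ E, ∀ y ∈ E, x ≠ y → ∃ v, ε ≤ dist (g v x) (g v y)) →
      #E ≤ K := by
  obtain ⟨F, hF⟩ := exists_finset_forall_dist_lt hg (half_pos hε)
  choose c hcF hc using hF
  refine ⟨#F, fun E hE => card_le_card_of_injOn c (fun x _ => hcF x) fun x hx y hy hxy => ?_⟩
  by_contra hne
  obtain ⟨v, hv⟩ := hE x hx y hy hne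
  have hx' := hc x v
  rw [hxy] at hx'
  linarith [dist_triangle_right (g v x) (g v y) (g v (c y)), hc y v]

end FiniteFamily

theorem Finset.eq_range_card_of_succ_mem {s : Finset ℕ} (hs : ∀ i, i + 1 ∈ s → i ∈ s) :
    s = range #s := by
  have hle : ∀ i ∈ s, ∀ j ≤ i, j ∈ s := fun i hi j hj =>
    Nat.decreasingInduction (fun k _ hk => hs k hk) hi hj
  ext j
  rw [mem_range]
  constructor
  · intro hj
    have := card_le_card fun k hk => hle j hj k (Nat.lt_succ_iff.1 (mem_range.1 hk))
    rwa [card_range] at this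
  · intro hj
    by_contra hjs
    have := card_le_card fun k hk => mem_range.2 (lt_of_not_ge fun hjk => hjs (hle k hk j hjk))
    rw [card_range] at this
    omega

theorem Finset.exists_coloring_of_card_neighbors_lt {α : Type*} [DecidableEq α]
    {R : α → α → Prop} [DecidableRel R] (hR : ∀ x y, R x y → R y x) {P : ℕ} (s : Finset α)
    (hdeg : ∀ x ∈ s, #{y ∈ s | y ≠ x ∧ R x y} < P) :
    ∃ c : α → ℕ, (∀ x ∈ s, c x < P) ∧ ∀ x ∈ s, ∀ y ∈ s, x ≠ y → R x y → c x ≠ c y := by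
  induction s using Finset.induction_on with
  | empty => exact ⟨fun _ => 0, by simp, by simp⟩
  | insert a s ha ih =>
    obtain ⟨c, hcP, hc⟩ := ih fun x hx => (card_le_card
      (filter_subset_filter _ (subset_insert a s))).trans_lt (hdeg x (mem_insert_of_mem hx))
    have hused : #(image c {y ∈ s | R a y}) < #(range P) := by
      refine card_image_le.trans_lt ((card_le_card fun y hy => ?_).trans_lt
        ((hdeg a (mem_insert_self a s)).trans_eq (card_range P).symm))
      simp only [mem_filter, mem_insert] at hy ⊢
      exact ⟨Or.inr hy.1, fun h => ha (h ▸ hy.1), hy.2⟩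
    obtain ⟨k, hkP, hk⟩ := exists_mem_notMem_of_card_lt_card hused
    have hfresh : ∀ y ∈ s, R a y → k ≠ c y := fun y hy hay h =>
      hk (mem_image.2 ⟨y, mem_filter.2 ⟨hy, hay⟩, h.symm⟩)
    have hne : ∀ y ∈ s, y ≠ a := fun y hy h => ha (h ▸ hy)
    refine ⟨Function.update c a k, fun x hx => ?_, fun x hx y hy hxy hR' => ?_⟩
    · rcases mem_insert.1 hx with rfl | hx
      · simpa using hkP
      · simpa [hne x hx] using hcP x hx
    · rcases mem_insert.1 hx with rfl | hxs <;> rcases mem_insert.1 hy with rfl | hys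
      · exact absurd rfl hxy
      · simpa [hne y hys] using hfresh y hys hR'
      · simpa [hne x hxs] using (hfresh x hxs (hR _ _ hR')).symm
      · simpa [hne x hxs, hne y hys] using hc x hxs y hys hxy hR'

theorem sum_exp_le_exp_mul_sum_of_injOn {α β : Type*} {E : Finset α} {F : Finset β}
    {u : α → ℝ} {v : β → ℝ} {c : ℝ} (ψ : α → β) (hψ : ∀ a ∈ E, ψ a ∈ F)
    (hinj : Set.InjOn ψ E) (h : ∀ a ∈ E, u a ≤ c + v (ψ a)) :
    ∑ a ∈ E, Real.exp (u a) ≤ Real.exp c * ∑ b ∈ F, Real.exp (v b) := by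
  classical
  calc ∑ a ∈ E, Real.exp (u a) ≤ ∑ a ∈ E, Real.exp c * Real.exp (v (ψ a)) :=
        sum_le_sum fun a ha => by rw [← Real.exp_add]; exact Real.exp_le_exp.2 (h a ha)
    _ = Real.exp c * ∑ b ∈ E.image ψ, Real.exp (v b) := by rw [mul_sum, sum_image hinj]
    _ ≤ Real.exp c * ∑ b ∈ F, Real.exp (v b) := by
        gcongr
        exact image_subset_iff.2 hψ

theorem EReal.le_of_forall_pos_le_add {a b : EReal} (h : ∀ κ : ℝ, 0 < κ → a ≤ κ + b) :
    a ≤ b := by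
  refine EReal.le_of_forall_lt_iff_le.1 fun z hz => ?_
  obtain ⟨y, hby, hyz⟩ := EReal.lt_iff_exists_real_btwn.1 hz
  calc a ≤ ((z - y : ℝ) : EReal) + b := h _ (_root_.sub_pos.2 (EReal.coe_lt_coe_iff.1 hyz))
    _ ≤ ((z - y : ℝ) : EReal) + y := by gcongr
    _ = z := by rw [← EReal.coe_add, _root_.sub_add_cancel]

section Words

variable {X ι : Type*}

theorem fw_take_succ (f : ι → X → X) {w : List ι} {i : ℕ} (hi : i < w.length) (x : X) :
    fw f (w.take (i + 1)) x = f w[i] (fw f (w.take i) x) := by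
  rw [fw, List.take_add_one, List.getElem?_eq_getElem hi, List.foldl_append]
  rfl

theorem continuous_fw [TopologicalSpace X] {f : ι → X → X} (hf : ∀ a, Continuous (f a))
    (w : List ι) : Continuous (fw f w) := by
  induction w with
  | nil => exact continuous_id
  | cons a w ih => exact ih.comp (hf a)

theorem eventually_forall_pos_mul_length_ofFn {r : ℝ} (hr : 0 < r) :
    ∀ᶠ n in atTop, ∀ σ : Fin n → ι, 0 < r * (List.ofFn σ).length :=
  (eventually_gt_atTop 0).mono fun n hn σ => by rw [List.length_ofFn]; positivity

end Words

section Counting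

variable {X ι : Type*} [MetricSpace X] (f : ι → X → X) (w : List ι)

noncomputable def farTimes (ε : ℝ) (x y : X) : Finset ℕ :=
  {i ∈ range w.length | ε ≤ dist (fw f (w.take i) x) (fw f (w.take i) y)}

variable {f w}

theorem rSpan_iff {ε r : ℝ} {F : Finset X} :
    rSpan f w ε r F ↔ ∀ x, ∃ y ∈ F, (#(farTimes f w ε x y) : ℝ) < r * w.length := by
  have hcard : ∀ x y : X, (#(farTimes f w ε x y) : ℝ) +
      #{i ∈ range w.length | dist (fw f (w.take i) x) (fw f (w.take i) y) < ε} = w.length := by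
    intro x y
    have := card_filter_add_card_filter_not (s := range w.length)
      (fun i => ε ≤ dist (fw f (w.take i) x) (fw f (w.take i) y))
    simp only [not_le, card_range] at this
    exact_mod_cast this
  refine forall_congr' fun x => exists_congr fun y => and_congr_right fun _ => ?_
  constructor <;> intro h <;> linarith [hcard x y]

theorem farTimes_subset_range {ε : ℝ} {x y : X} : farTimes f w ε x y ⊆ range w.length :=
  filter_subset _ _

theorem farTimes_comm (ε : ℝ) (x y : X) : farTimes f w ε x y = farTimes f w ε y x := by
  simp only [farTimes, dist_comm]

theorem farTimes_anti {ε₁ ε₂ : ℝ} (h : ε₁ ≤ ε₂) (x y : X) :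
    farTimes f w ε₂ x y ⊆ farTimes f w ε₁ x y :=
  monotone_filter_right _ fun _ _ hi => h.trans hi

theorem farTimes_add_subset (ε₁ ε₂ : ℝ) (x y z : X) :
    farTimes f w (ε₁ + ε₂) x z ⊆ farTimes f w ε₁ x y ∪ farTimes f w ε₂ y z := by
  intro i hi
  simp only [farTimes, mem_union, mem_filter] at hi ⊢
  by_contra! h
  have := dist_triangle (fw f (w.take i) x) (fw f (w.take i) y) (fw f (w.take i) z)
  linarith [h.1 hi.1, h.2 hi.1, hi.2]

theorem zero_mem_farTimes {ε : ℝ} {x y : X} (h : 0 ∈ farTimes f w ε x y) : ε ≤ dist x y :=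
  (mem_filter.1 h).2

/-- If shrinking the scale from `ε` to `ε'` creates no new far times, then, since `ε'`-close points
are mapped `ε`-close, a far time can only be preceded by far times. -/
theorem farTimes_eq_range_of_card_le {ε ε' : ℝ} (hε' : ε' ≤ ε)
    (hmod : ∀ u v, dist u v < ε' → ∀ a, dist (f a u) (f a v) < ε) {x y : X}
    (h : #(farTimes f w ε' x y) ≤ #(farTimes f w ε x y)) :
    farTimes f w ε x y = range #(farTimes f w ε x y) ∧
      farTimes f w ε' x y = range #(farTimes f w ε x y) := by
  have heq := eq_of_subset_of_card_le (farTimes_anti hε' x y) h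
  suffices hrange : farTimes f w ε x y = range #(farTimes f w ε x y) from
    ⟨hrange, heq.symm.trans hrange⟩
  refine eq_range_card_of_succ_mem fun i hi => ?_
  have hi' := mem_filter.1 hi
  have hin : i < w.length := by have := mem_range.1 hi'.1; omega
  by_contra hnot
  rw [heq] at hnot
  have hclose : dist (fw f (w.take i) x) (fw f (w.take i) y) < ε' := by
    simpa [farTimes, hin] using hnot
  have := hmod _ _ hclose w[i]
  rw [← fw_take_succ f hin, ← fw_take_succ f hin] at this
  exact absurd hi'.2 (not_le.2 this)

theorem card_filter_card_farTimes_le_lt [DecidableEq X] {ε ε' r : ℝ}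
    (hmod : ∀ u v, dist u v < ε' → ∀ a, dist (f a u) (f a v) < ε)
    (hε' : 0 ≤ ε') (h2ε' : 2 * ε' ≤ ε) (hrw : 0 < r * w.length) {P : ℕ}
    (hP : ∀ A : Finset X, (∀ p ∈ A, ∀ q ∈ A, p ≠ q → ε ≤ dist p q) → #A ≤ P) {G : Finset X}
    (hG : ∀ x ∈ G, ∀ y ∈ G, x ≠ y → r * w.length ≤ #(farTimes f w ε x y)) {x : X} (hx : x ∈ G) :
    #{y ∈ G | y ≠ x ∧ (#(farTimes f w ε' x y) : ℝ) ≤ r * w.length} < P := by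
  set N := {y ∈ G | y ≠ x ∧ (#(farTimes f w ε' x y) : ℝ) ≤ r * w.length}
  have hN : ∀ y ∈ N, (#(farTimes f w ε x y) : ℝ) = r * w.length ∧
      farTimes f w ε x y = range #(farTimes f w ε x y) ∧
      farTimes f w ε' x y = range #(farTimes f w ε x y) := by
    intro y hy
    obtain ⟨hyG, hyx, hy'⟩ := mem_filter.1 hy
    have hfar := hG x hx y hyG (Ne.symm hyx)
    obtain ⟨hrange, hrange'⟩ :=
      farTimes_eq_range_of_card_le (by linarith) hmod (by exact_mod_cast hy'.trans hfar)
    have hcard : #(farTimes f w ε' x y) = #(farTimes f w ε x y) := by rw [hrange', card_range]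
    exact ⟨le_antisymm (hcard ▸ hy') hfar, hrange, hrange'⟩
  have hpos : ∀ y ∈ N, 0 < #(farTimes f w ε x y) := fun y hy =>
    Nat.cast_pos.1 ((hN y hy).1 ▸ hrw)
  have hx0 : ∀ y ∈ N, ε ≤ dist x y := by
    intro y hy
    refine zero_mem_farTimes (f := f) (w := w) ?_
    rw [(hN y hy).2.1]
    exact mem_range.2 (hpos y hy)
  have hsep : ∀ p ∈ N, ∀ q ∈ N, p ≠ q → ε ≤ dist p q := by
    intro p hp q hq hpq
    have hk : #(farTimes f w ε x q) = #(farTimes f w ε x p) := by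
      exact_mod_cast (hN q hq).1.trans (hN p hp).1.symm
    have hsub : farTimes f w ε p q ⊆ range #(farTimes f w ε x p) :=
      calc farTimes f w ε p q ⊆ farTimes f w (ε' + ε') p q := farTimes_anti (by linarith) p q
        _ ⊆ farTimes f w ε' p x ∪ farTimes f w ε' x q := farTimes_add_subset ε' ε' p x q
        _ = range #(farTimes f w ε x p) := by
          rw [farTimes_comm ε' p x, (hN p hp).2.2, (hN q hq).2.2, hk, union_self]
    have hcard : #(range #(farTimes f w ε x p)) ≤ #(farTimes f w ε p q) := by
      rw [card_range]
      exact_mod_cast (hN p hp).1.trans_le (hG p (mem_filter.1 hp).1 q (mem_filter.1 hq).1 hpq)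
    refine zero_mem_farTimes (f := f) (w := w) ?_
    rw [eq_of_subset_of_card_le hsub hcard]
    exact mem_range.2 (hpos p hp)
  have hxN : x ∉ N := fun h => (mem_filter.1 h).2.1 rfl
  have := hP (insert x N) fun p hp q hq hpq => by
    rcases mem_insert.1 hp with hpx | hpN <;> rcases mem_insert.1 hq with hqx | hqN
    · exact absurd (hpx.trans hqx.symm) hpq
    · exact hpx ▸ hx0 q hqN
    · rw [hqx, dist_comm]
      exact hx0 p hpN
    · exact hsep p hpN q hqN hpq
  rw [card_insert_of_notMem hxN] at this
  omega

end Counting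

section Compact

variable {X ι : Type*} [MetricSpace X] [CompactSpace X] {f : ι → X → X} {w : List ι}

theorem exists_rSpan (hf : ∀ a, Continuous (f a)) {ε r : ℝ} (hε : 0 < ε)
    (hrw : 0 < r * w.length) : ∃ F, rSpan f w ε r F := by
  obtain ⟨F, hF⟩ := exists_finset_forall_dist_lt (g := fun i : Fin w.length => fw f (w.take i))
    (fun _ => continuous_fw hf _) hε
  refine ⟨F, rSpan_iff.2 fun x => ?_⟩
  obtain ⟨y, hy, hxy⟩ := hF x
  have : farTimes f w ε x y = ∅ :=
    filter_eq_empty_iff.2 fun i hi => not_le.2 (hxy ⟨i, mem_range.1 hi⟩)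
  exact ⟨y, hy, by simpa [this] using hrw⟩

theorem exists_card_le_of_farTimes_nonempty (hf : ∀ a, Continuous (f a)) {ε : ℝ} (hε : 0 < ε) :
    ∃ K : ℕ, ∀ E : Finset X, (∀ x ∈ E, ∀ y ∈ E, x ≠ y → (farTimes f w ε x y).Nonempty) →
      #E ≤ K := by
  obtain ⟨K, hK⟩ := exists_card_le_of_forall_exists_le_dist
    (g := fun i : Fin w.length => fw f (w.take i)) (fun _ => continuous_fw hf _) hε
  refine ⟨K, fun E hE => hK E fun x hx y hy hxy => ?_⟩
  obtain ⟨i, hi⟩ := hE x hx y hy hxy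
  obtain ⟨hi, hd⟩ := mem_filter.1 hi
  exact ⟨⟨i, mem_range.1 hi⟩, hd⟩

end Compact

section BirkhoffSums

variable {X ι : Type*} {f : ι → X → X} {φ : X → ℝ} {w : List ι} {M : ℝ}

theorem abs_Sw_le (hM : ∀ x, |φ x| ≤ M) (x : X) : |Sw f φ w x| ≤ w.length * M :=
  calc |Sw f φ w x| ≤ ∑ i ∈ range w.length, |φ (fw f (w.take i) x)| := abs_sum_le_sum_abs _ _
    _ ≤ ∑ _i ∈ range w.length, M := sum_le_sum fun _ _ => hM _
    _ = w.length * M := by rw [sum_const, card_range, nsmul_eq_mul]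

theorem Sw_sub_le [MetricSpace X] (hM : ∀ x, |φ x| ≤ M) {δ κ : ℝ} (hκ0 : 0 ≤ κ)
    (hκ : ∀ u v, dist u v < δ → |φ u - φ v| ≤ κ) (x y : X) :
    Sw f φ w x - Sw f φ w y ≤ w.length * κ + 2 * M * #(farTimes f w δ x y) := by
  rw [Sw, Sw, ← sum_sub_distrib]
  calc ∑ i ∈ range w.length, (φ (fw f (w.take i) x) - φ (fw f (w.take i) y))
      ≤ ∑ i ∈ range w.length, (κ + if i ∈ farTimes f w δ x y then 2 * M else 0) := by
        refine sum_le_sum fun i hi => ?_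
        split_ifs with h
        · linarith [abs_le.1 (hM (fw f (w.take i) x)), abs_le.1 (hM (fw f (w.take i) y))]
        · have hclose : dist (fw f (w.take i) x) (fw f (w.take i) y) < δ := by
            simpa [farTimes, hi] using h
          linarith [le_abs_self (φ (fw f (w.take i) x) - φ (fw f (w.take i) y)), hκ _ _ hclose]
    _ = w.length * κ + 2 * M * #(farTimes f w δ x y) := by
        rw [sum_add_distrib, sum_ite_mem,
          inter_eq_right.2 farTimes_subset_range]
        simp only [sum_const, card_range, nsmul_eq_mul]
        ring

end BirkhoffSums

section PartitionSums

variable {X ι : Type*} [MetricSpace X] {f : ι → X → X} {φ : X → ℝ} {w : List ι} {ε r : ℝ}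

theorem Qw_le_sum {F : Finset X} (hF : rSpan f w ε r F) :
    Qw f φ w ε r ≤ ∑ x ∈ F, Real.exp (Sw f φ w x) :=
  csInf_le ⟨0, by rintro _ ⟨F, -, rfl⟩; positivity⟩ ⟨F, hF, rfl⟩

theorem le_Qw {a : ℝ} (hne : ∃ F, rSpan f w ε r F)
    (h : ∀ F, rSpan f w ε r F → a ≤ ∑ x ∈ F, Real.exp (Sw f φ w x)) : a ≤ Qw f φ w ε r :=
  le_csInf (hne.elim fun F hF => ⟨_, F, hF, rfl⟩) (by rintro _ ⟨F, hF, rfl⟩; exact h F hF)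

theorem Qws_le {a : ℝ} (h : ∀ E, rSep f w ε r E → ∑ x ∈ E, Real.exp (Sw f φ w x) ≤ a) :
    Qws f φ w ε r ≤ a :=
  csSup_le ⟨0, ∅, by simp [rSep], by simp⟩ (by rintro _ ⟨E, hE, rfl⟩; exact h E hE)

variable [CompactSpace X] {M : ℝ}

theorem Qw_pos [Nonempty X] (hf : ∀ a, Continuous (f a)) (hM : ∀ x, |φ x| ≤ M) (hε : 0 < ε)
    (hrw : 0 < r * w.length) : 0 < Qw f φ w ε r := by
  refine (Real.exp_pos (-(w.length * M))).trans_le (le_Qw (exists_rSpan hf hε hrw) fun F hF => ?_)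
  obtain ⟨y, hy, -⟩ := hF (Classical.arbitrary X)
  exact (Real.exp_le_exp.2 (neg_le_of_abs_le (abs_Sw_le hM y))).trans
    (single_le_sum (fun _ _ => (Real.exp_pos _).le) hy)

theorem sum_le_Qws (hf : ∀ a, Continuous (f a)) (hM : ∀ x, |φ x| ≤ M) (hε : 0 < ε) (hr : 0 ≤ r)
    {E : Finset X} (hE : rSep f w ε r E) : ∑ x ∈ E, Real.exp (Sw f φ w x) ≤ Qws f φ w ε r := by
  obtain ⟨K, hK⟩ := exists_card_le_of_farTimes_nonempty hf (w := w) hε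
  refine le_csSup ⟨K * Real.exp (w.length * M), ?_⟩ ⟨E, hE, rfl⟩
  rintro _ ⟨E, hE, rfl⟩
  have hcard : #E ≤ K := hK E fun x hx y hy hxy => card_pos.1 <| Nat.cast_pos.1 <|
    (by positivity : (0 : ℝ) ≤ r * w.length).trans_lt (hE x hx y hy hxy)
  calc ∑ x ∈ E, Real.exp (Sw f φ w x) ≤ #E • Real.exp (w.length * M) :=
        sum_le_card_nsmul _ _ _ fun x _ => Real.exp_le_exp.2 (le_of_abs_le (abs_Sw_le hM x))
    _ ≤ K * Real.exp (w.length * M) := by rw [nsmul_eq_mul]; gcongr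

theorem Qws_pos [Nonempty X] (hf : ∀ a, Continuous (f a)) (hM : ∀ x, |φ x| ≤ M) (hε : 0 < ε)
    (hr : 0 ≤ r) : 0 < Qws f φ w ε r := by
  have hsep : rSep f w ε r {Classical.arbitrary X} := by simp [rSep]
  have := sum_le_Qws hf hM hε hr hsep
  rw [sum_singleton] at this
  exact (Real.exp_pos _).trans_le this

theorem Qws_anti (hf : ∀ a, Continuous (f a)) (hM : ∀ x, |φ x| ≤ M) {ε₁ ε₂ : ℝ}
    (hε₁ : 0 < ε₁) (h : ε₁ ≤ ε₂) (hr : 0 ≤ r) : Qws f φ w ε₂ r ≤ Qws f φ w ε₁ r :=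
  Qws_le fun E hE => sum_le_Qws hf hM hε₁ hr fun x hx y hy hxy =>
    (hE x hx y hy hxy).trans_le (by exact_mod_cast card_le_card (farTimes_anti h x y))

end PartitionSums

section Comparison

variable {X ι : Type*} [MetricSpace X] [CompactSpace X] {f : ι → X → X} {φ : X → ℝ}
  {w : List ι} {ε r M : ℝ}

theorem Qws_two_mul_le (hf : ∀ a, Continuous (f a)) (hM : ∀ x, |φ x| ≤ M) {κ : ℝ}
    (hκ0 : 0 ≤ κ) (hκ : ∀ u v, dist u v < ε / 2 → |φ u - φ v| ≤ κ) (hε : 0 < ε)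
    (hrw : 0 < r * w.length) :
    Qws f φ w ε (2 * r) ≤ Real.exp (w.length * (κ + 2 * M * r)) * Qw f φ w (ε / 2) r := by
  refine Qws_le fun E hE => ?_
  rw [← div_le_iff₀' (Real.exp_pos _)]
  refine le_Qw (exists_rSpan hf (half_pos hε) hrw) fun F hF => ?_
  rw [div_le_iff₀' (Real.exp_pos _)]
  choose ψ hψF hψ using rSpan_iff.1 hF
  refine sum_exp_le_exp_mul_sum_of_injOn ψ (fun a _ => hψF a) (fun a ha b hb hab => ?_)
    fun a _ => ?_
  · by_contra hne
    have hsep : 2 * r * w.length < #(farTimes f w ε a b) := hE a ha b hb hne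
    have htri := card_le_card (farTimes_add_subset (f := f) (w := w) (ε / 2) (ε / 2) a (ψ a) b)
    rw [add_halves, hab, farTimes_comm _ (ψ b)] at htri
    have : (#(farTimes f w ε a b) : ℝ) ≤ #(farTimes f w (ε / 2) a (ψ b)) +
        #(farTimes f w (ε / 2) b (ψ b)) := by
      exact_mod_cast htri.trans (card_union_le _ _)
    linarith [hψ b, hab ▸ hψ a]
  · have hM0 : 0 ≤ M := (abs_nonneg _).trans (hM a)
    have hfar := mul_le_mul_of_nonneg_left (hψ a).le (by positivity : 0 ≤ 2 * M)
    linarith [Sw_sub_le (w := w) (f := f) hM hκ0 hκ a (ψ a)]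

end Comparison

section Packing

variable {X ι : Type*} [MetricSpace X] [CompactSpace X] {f : ι → X → X} {φ : X → ℝ}
  {w : List ι} {ε ε' r M : ℝ}

theorem exists_rSpan_of_le_card_farTimes (hf : ∀ a, Continuous (f a)) (hε : 0 < ε)
    (hrw : 0 < r * w.length) : ∃ G : Finset X,
      (∀ x ∈ G, ∀ y ∈ G, x ≠ y → r * w.length ≤ #(farTimes f w ε x y)) ∧ rSpan f w ε r G := by
  classical
  obtain ⟨K, hK⟩ := exists_card_le_of_farTimes_nonempty hf (w := w) hε
  set S : Set ℕ := {k | ∃ G : Finset X,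
    (∀ x ∈ G, ∀ y ∈ G, x ≠ y → r * w.length ≤ #(farTimes f w ε x y)) ∧ #G = k}
  have hbdd : BddAbove S := ⟨K, by
    rintro _ ⟨G, hG, rfl⟩
    exact hK G fun x hx y hy hxy => card_pos.1 (Nat.cast_pos.1 (hrw.trans_le (hG x hx y hy hxy)))⟩
  obtain ⟨G, hG, hGcard⟩ : sSup S ∈ S := Nat.sSup_mem ⟨0, ∅, by simp, rfl⟩ hbdd
  refine ⟨G, hG, rSpan_iff.2 fun x => ?_⟩
  by_cases hx : x ∈ G
  · have : farTimes f w ε x x = ∅ := filter_eq_empty_iff.2 fun _ _ => by simpa using hε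
    exact ⟨x, hx, by simpa [this] using hrw⟩
  by_contra! hfar
  have hins : #(insert x G) ∈ S := ⟨insert x G, fun p hp q hq hpq => by
    rcases mem_insert.1 hp with rfl | hpG <;> rcases mem_insert.1 hq with rfl | hqG
    · exact absurd rfl hpq
    · exact hfar q hqG
    · exact farTimes_comm (f := f) (w := w) ε p q ▸ hfar p hpG
    · exact hG p hpG q hqG hpq, rfl⟩
  have := le_csSup hbdd hins
  rw [card_insert_of_notMem hx, hGcard] at this
  omega

theorem Qw_le_mul_Qws (hf : ∀ a, Continuous (f a)) (hM : ∀ x, |φ x| ≤ M) (hε : 0 < ε)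
    (hmod : ∀ u v, dist u v < ε' → ∀ a, dist (f a u) (f a v) < ε) (hε' : 0 < ε')
    (h2ε' : 2 * ε' ≤ ε) (hrw : 0 < r * w.length) {P : ℕ}
    (hP : ∀ A : Finset X, (∀ p ∈ A, ∀ q ∈ A, p ≠ q → ε ≤ dist p q) → #A ≤ P) :
    Qw f φ w ε r ≤ P * Qws f φ w ε' r := by
  classical
  obtain ⟨G, hG, hspan⟩ := exists_rSpan_of_le_card_farTimes hf hε hrw
  obtain ⟨c, hcP, hc⟩ := exists_coloring_of_card_neighbors_lt
    (R := fun x y => (#(farTimes f w ε' x y) : ℝ) ≤ r * w.length)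
    (fun x y h => farTimes_comm (f := f) (w := w) ε' x y ▸ h) G
    fun x hx => card_filter_card_farTimes_le_lt hmod hε'.le h2ε' hrw hP hG hx
  have hr : 0 ≤ r := (pos_of_mul_pos_left hrw (Nat.cast_nonneg _)).le
  have hsep : ∀ i, rSep f w ε' r {x ∈ G | c x = i} := by
    intro i x hx y hy hxy
    rw [mem_filter] at hx hy
    exact not_le.1 fun h => hc x hx.1 y hy.1 hxy h (hx.2.trans hy.2.symm)
  calc Qw f φ w ε r ≤ ∑ x ∈ G, Real.exp (Sw f φ w x) := Qw_le_sum hspan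
    _ = ∑ i ∈ range P, ∑ x ∈ G with c x = i, Real.exp (Sw f φ w x) :=
        (sum_fiberwise_of_maps_to (fun x hx => mem_range.2 (hcP x hx)) _).symm
    _ ≤ ∑ _i ∈ range P, Qws f φ w ε' r :=
        sum_le_sum fun i _ => sum_le_Qws hf hM hε' hr (hsep i)
    _ = P * Qws f φ w ε' r := by rw [sum_const, card_range, nsmul_eq_mul]

end Packing

section GrowthRate

/-- `Pse f φ ε r` is by definition `growthRate (Qns f φ · ε r)`, and `Pr f φ r` the supremum over
`ε > 0` of `growthRate (Qn f φ · ε r)`. -/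
noncomputable def growthRate (a : ℕ → ℝ) : EReal :=
  atTop.limsup fun n : ℕ => (((n : ℝ)⁻¹ * Real.log (a n) : ℝ) : EReal)

theorem growthRate_congr {a b : ℕ → ℝ} (h : a =ᶠ[atTop] b) : growthRate a = growthRate b :=
  limsup_congr (h.mono fun n hn => by rw [hn])

theorem growthRate_const (C : ℝ) : growthRate (fun _ => C) = 0 := by
  refine Tendsto.limsup_eq ?_
  rw [← EReal.coe_zero]
  refine (continuous_coe_real_ereal.tendsto 0).comp ?_
  simpa using (tendsto_inv_atTop_zero.comp tendsto_natCast_atTop_atTop).mul_const (Real.log C)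

theorem growthRate_exp_mul (k : ℝ) : growthRate (fun n => Real.exp (n * k)) = k := by
  refine (limsup_congr ((eventually_ne_atTop 0).mono fun n hn => ?_)).trans (limsup_const _)
  rw [Real.log_exp, inv_mul_cancel_left₀ (Nat.cast_ne_zero.2 hn)]

theorem growthRate_le_add {a b c : ℕ → ℝ} {k : ℝ} (hc : growthRate c = k)
    (ha : ∀ᶠ n in atTop, 0 < a n) (hc0 : ∀ᶠ n in atTop, 0 < c n)
    (h : ∀ᶠ n in atTop, a n ≤ c n * b n) : growthRate a ≤ k + growthRate b := by
  have hle : ∀ᶠ n : ℕ in atTop, (((n : ℝ)⁻¹ * Real.log (a n) : ℝ) : EReal) ≤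
      (((n : ℝ)⁻¹ * Real.log (c n) : ℝ) : EReal) + (((n : ℝ)⁻¹ * Real.log (b n) : ℝ) : EReal) := by
    filter_upwards [ha, hc0, h] with n ha hc0 h
    have hb : 0 < b n := pos_of_mul_pos_right (ha.trans_le h) hc0.le
    rw [← EReal.coe_add, EReal.coe_le_coe_iff, ← mul_add, ← Real.log_mul hc0.ne' hb.ne']
    gcongr
  have hfin : growthRate c ≠ ⊥ ∧ growthRate c ≠ ⊤ := by
    rw [hc]
    exact ⟨EReal.coe_ne_bot k, EReal.coe_ne_top k⟩
  calc growthRate a ≤ growthRate c + growthRate b :=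
        (limsup_le_limsup hle).trans (EReal.limsup_add_le (.inl hfin.1) (.inl hfin.2))
    _ = k + growthRate b := by rw [hc]

end GrowthRate

section Pressure

variable {X ι : Type*} [MetricSpace X] [Fintype ι] {f : ι → X → X} {φ : X → ℝ} {n : ℕ}
  {ε ε' r r' C M : ℝ}

theorem Qn_le_mul_Qns
    (h : ∀ σ : Fin n → ι, Qw f φ (List.ofFn σ) ε r ≤ C * Qws f φ (List.ofFn σ) ε' r') :
    Qn f φ n ε r ≤ C * Qns f φ n ε' r' := by
  rw [Qn, Qns, mul_left_comm]
  gcongr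
  rw [mul_sum]
  gcongr with σ
  exact h σ

theorem Qns_le_mul_Qn
    (h : ∀ σ : Fin n → ι, Qws f φ (List.ofFn σ) ε r ≤ C * Qw f φ (List.ofFn σ) ε' r') :
    Qns f φ n ε r ≤ C * Qn f φ n ε' r' := by
  rw [Qn, Qns, mul_left_comm]
  gcongr
  rw [mul_sum]
  gcongr with σ
  exact h σ

theorem Qn_pos [Nonempty ι] (h : ∀ σ : Fin n → ι, 0 < Qw f φ (List.ofFn σ) ε r) :
    0 < Qn f φ n ε r :=
  mul_pos (by have := Fintype.card_pos (α := ι); positivity)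
    (sum_pos (fun σ _ => h σ) univ_nonempty)

theorem Qns_pos [Nonempty ι] (h : ∀ σ : Fin n → ι, 0 < Qws f φ (List.ofFn σ) ε r) :
    0 < Qns f φ n ε r :=
  mul_pos (by have := Fintype.card_pos (α := ι); positivity)
    (sum_pos (fun σ _ => h σ) univ_nonempty)

theorem Qn_of_isEmpty [IsEmpty ι] (hn : n ≠ 0) : Qn f φ n ε r = 0 := by
  simp [Qn, hn]

theorem Qns_of_isEmpty [IsEmpty ι] (hn : n ≠ 0) : Qns f φ n ε r = 0 := by
  simp [Qns, hn]

theorem Pr_of_isEmpty [IsEmpty ι] : Pr f φ r = 0 := by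
  have h : ∀ ε, growthRate (fun n => Qn f φ n ε r) = 0 := fun ε =>
    (growthRate_congr ((eventually_ne_atTop 0).mono fun _ hn => Qn_of_isEmpty hn)).trans
      (growthRate_const 0)
  show ⨆ ε ∈ Set.Ioi (0 : ℝ), growthRate (fun n => Qn f φ n ε r) = 0
  simp only [h]
  exact biSup_const Set.nonempty_Ioi

theorem Ps_of_isEmpty [IsEmpty ι] : Ps f φ r = 0 := by
  have h : ∀ ε, Pse f φ ε r = 0 := fun ε =>
    (growthRate_congr ((eventually_ne_atTop 0).mono fun _ hn => Qns_of_isEmpty hn)).trans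
      (growthRate_const 0)
  simp only [Ps, h]
  exact biSup_const Set.nonempty_Ioi

variable [CompactSpace X] [Nonempty X] [Nonempty ι]

theorem Pr_le_Ps (hf : ∀ a, Continuous (f a)) (hM : ∀ x, |φ x| ≤ M) (hr : 0 < r) :
    Pr f φ r ≤ Ps f φ r := by
  refine iSup₂_le fun ε hε => ?_
  obtain ⟨δ, hδ, hmod⟩ := exists_pos_forall_dist_lt hf hε
  obtain ⟨P, hP⟩ := exists_card_le_of_forall_exists_le_dist (g := fun (_ : Unit) (x : X) => x)
    (fun _ => continuous_id) hε
  have hP' : ∀ A : Finset X, (∀ p ∈ A, ∀ q ∈ A, p ≠ q → ε ≤ dist p q) → #A ≤ P :=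
    fun A hA => hP A fun p hp q hq hpq => ⟨(), hA p hp q hq hpq⟩
  have hP0 : 0 < P := hP' {Classical.arbitrary X} (by simp)
  have hε' : 0 < min δ (ε / 2) := lt_min hδ (half_pos hε)
  have hrw := eventually_forall_pos_mul_length_ofFn (ι := ι) hr
  calc growthRate (fun n => Qn f φ n ε r)
      ≤ 0 + growthRate (fun n => Qns f φ n (min δ (ε / 2)) r) := by
        refine growthRate_le_add (growthRate_const P)
          (hrw.mono fun n hn => Qn_pos fun σ => Qw_pos hf hM hε (hn σ))
          (Eventually.of_forall fun _ => by positivity)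
          (hrw.mono fun n hn => Qn_le_mul_Qns fun σ => Qw_le_mul_Qws hf hM hε
            (fun u v huv => hmod u v (huv.trans_le (min_le_left _ _))) hε'
            (by linarith [min_le_right δ (ε / 2)]) (hn σ) hP')
    _ ≤ Ps f φ r := by
        rw [zero_add]
        exact le_iSup₂ (f := fun ε _ => Pse f φ ε r) (min δ (ε / 2)) hε'

theorem Ps_two_mul_le (hf : ∀ a, Continuous (f a)) (hφ : Continuous φ) (hM : ∀ x, |φ x| ≤ M)
    (hr : 0 < r) : Ps f φ (2 * r) ≤ ((2 * M * r : ℝ) : EReal) + Pr f φ r := by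
  refine EReal.le_of_forall_pos_le_add fun κ hκ => iSup₂_le fun ε hε => ?_
  obtain ⟨η, hη, hφη⟩ := Metric.uniformContinuous_iff.1
    (CompactSpace.uniformContinuous_of_continuous hφ) κ hκ
  set ε₁ := min ε η
  have hε₁ : 0 < ε₁ := lt_min hε hη
  have hκ' : ∀ u v, dist u v < ε₁ / 2 → |φ u - φ v| ≤ κ := fun u v huv =>
    (hφη (huv.trans_le (by linarith [min_le_right ε η]))).le
  have hrw := eventually_forall_pos_mul_length_ofFn (ι := ι) hr
  calc Pse f φ ε (2 * r)
      ≤ ((κ + 2 * M * r : ℝ) : EReal) + growthRate (fun n => Qn f φ n (ε₁ / 2) r) := by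
        refine growthRate_le_add (growthRate_exp_mul _)
          (Eventually.of_forall fun _ => Qns_pos fun _ => Qws_pos hf hM hε (by positivity))
          (Eventually.of_forall fun _ => Real.exp_pos _)
          (hrw.mono fun n hn => Qns_le_mul_Qn fun σ => ?_)
        have := Qws_two_mul_le hf hM hκ.le hκ' hε₁ (hn σ)
        rw [List.length_ofFn] at this
        exact (Qws_anti hf hM hε₁ (min_le_left ε η) (by positivity)).trans this
    _ ≤ ((κ + 2 * M * r : ℝ) : EReal) + Pr f φ r := by
        gcongr
        exact le_iSup₂ (f := fun ε _ => growthRate (fun n => Qn f φ n ε r)) (ε₁ / 2)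
          (half_pos hε₁)
    _ = κ + (((2 * M * r : ℝ) : EReal) + Pr f φ r) := by rw [EReal.coe_add, add_assoc]

end Pressure

theorem Ps_sub_le_Pr_le_Ps_general
    {X : Type*} [MetricSpace X] [CompactSpace X] {m : ℕ}
    (f : Fin m → X → X) (hf : ∀ i, Continuous (f i))
    (φ : X → ℝ) (hφ : Continuous φ)
    (M r : ℝ) (hr0 : 0 < r)
    (hM : IsGreatest (Set.range fun x => |φ x|) M) :
    Ps f φ (2 * r) - ((2 * M * r : ℝ) : EReal) ≤ Pr f φ r ∧
      Pr f φ r ≤ Ps f φ r := by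
  obtain ⟨x₀, hx₀⟩ := hM.1
  have hφM : ∀ x, |φ x| ≤ M := fun x => hM.2 ⟨x, rfl⟩
  have : Nonempty X := ⟨x₀⟩
  rcases isEmpty_or_nonempty (Fin m) with hm | hm
  · have hM0 : 0 ≤ M := hx₀ ▸ abs_nonneg _
    rw [Pr_of_isEmpty, Ps_of_isEmpty, Ps_of_isEmpty]
    refine ⟨?_, le_rfl⟩
    rw [← EReal.coe_zero, ← EReal.coe_sub, EReal.coe_le_coe_iff]
    nlinarith
  · exact ⟨EReal.sub_le_of_le_add' (Ps_two_mul_le hf hφ hφM hr0), Pr_le_Ps hf hφM hr0⟩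

theorem Ps_sub_le_Pr_le_Ps
    {X : Type*} [MetricSpace X] [CompactSpace X] {m : ℕ}
    (f : Fin m → X → X) (hf : ∀ i, Continuous (f i))
    (φ : X → ℝ) (hφ : Continuous φ)
    (M r : ℝ) (hr0 : 0 < r) (hr2 : r < 1 / 2)
    (hM : IsGreatest (Set.range fun x => |φ x|) M) :
    Ps f φ (2 * r) - ((2 * M * r : ℝ) : EReal) ≤ Pr f φ r ∧
      Pr f φ r ≤ Ps f φ r :=
  Ps_sub_le_Pr_le_Ps_general f hf φ hφ M r hr0 hM
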